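/- If D is a kernel-perfect digraph orientation of the line graph L(G) of a graph G, and f(e) = 1 + (out-degree of e in D) for every edge e of G, then G is f-edge-choosable. -/
import Mathlib


open SimpleGraph

/-- Adjacency in the line graph `L(G)`: two distinct edges sharing an endpoint. -/
def lineAdj {V : Type*} (G : SimpleGraph V) (e f : G.edgeSet) : Prop :=
  e ≠ f ∧ ∃ x : V, x ∈ (e : Sym2 V) ∧ x ∈ (f : Sym2 V)

/-- `D` is an orientation of the (loopless) adjacency relation `Adj`:
every arc of `D` is an edge, and every edge gets at least one of its two arcs. -/
def IsOrientation {α : Type*} (Adj : α → α → Prop) (D : α → α → Prop) : Prop :=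
  (∀ a b, D a b → Adj a b) ∧ (∀ a b, Adj a b → D a b ∨ D b a)

/-- A digraph (relation) is kernel-perfect if every induced subdigraph has a kernel:
an independent set `S` such that every vertex outside `S` has an out-neighbor in `S`. -/
def KernelPerfect {α : Type*} (D : α → α → Prop) : Prop :=
  ∀ Z : Set α, ∃ S ⊆ Z, (∀ a ∈ S, ∀ b ∈ S, ¬ D a b) ∧
    ∀ z ∈ Z, z ∉ S → ∃ s ∈ S, D z s

/-- Out-degree of a vertex in a digraph given as a relation. -/
noncomputable def outDeg {α : Type*} (D : α → α → Prop) (a : α) : ℕ := {b | D a b}.ncard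

/-- Degree of a vertex. -/
noncomputable def deg {V : Type*} (G : SimpleGraph V) (v : V) : ℕ := (G.neighborSet v).ncard

/-- Maximum degree. -/
noncomputable def maxDeg {V : Type*} (G : SimpleGraph V) : ℕ := sSup (Set.range (deg G))

/-- `G` is `f`-edge-orientable: `L(G)` admits a kernel-perfect orientation with
`1 + d⁺(e) ≤ f e` for every edge `e`. -/
def EdgeOrientable {V : Type*} (G : SimpleGraph V) (f : G.edgeSet → ℕ) : Prop :=
  ∃ D : G.edgeSet → G.edgeSet → Prop,
    IsOrientation (lineAdj G) D ∧ KernelPerfect D ∧ ∀ e, outDeg D e + 1 ≤ f e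

open Classical in
/-- The function `f_{k,v}`: `deg v` on edges incident to `v`, and `k` elsewhere. -/
noncomputable def fkv {V : Type*} (G : SimpleGraph V) (k : ℕ) (v : V) (e : G.edgeSet) : ℕ :=
  if v ∈ (e : Sym2 V) then deg G v else k

/-- `G` is strongly `k`-edge-orientable. -/
def StronglyEdgeOrientable {V : Type*} (G : SimpleGraph V) (k : ℕ) : Prop :=
  ∀ v : V, EdgeOrientable G (fkv G k v)

/-- `G` is `f`-edge-choosable. -/
def FEdgeChoosable {V : Type*} (G : SimpleGraph V) (f : G.edgeSet → ℕ) : Prop :=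
  ∀ ℓ : G.edgeSet → Finset ℕ, (∀ e, f e ≤ (ℓ e).card) →
    ∃ φ : G.edgeSet → ℕ, (∀ e, φ e ∈ ℓ e) ∧
      ∀ e₁ e₂, lineAdj G e₁ e₂ → φ e₁ ≠ φ e₂

/-- `G ∈ G*`: any two distinct odd cycles share at most one edge. -/
def InGStar {V : Type*} (G : SimpleGraph V) : Prop :=
  ∀ (u w : V) (c₁ : G.Walk u u) (c₂ : G.Walk w w),
    c₁.IsCycle → c₂.IsCycle → Odd c₁.length → Odd c₂.length →
    {e | e ∈ c₁.edges} ≠ {e | e ∈ c₂.edges} →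
    ({e | e ∈ c₁.edges} ∩ {e | e ∈ c₂.edges}).ncard ≤ 1

/-- `G` is 2-connected: connected, and still connected after deleting any one vertex. -/
def TwoConn {V : Type*} (G : SimpleGraph V) : Prop :=
  G.Connected ∧ ∀ v : V, (G.induce {w | w ≠ v}).Connected

/-- A block of `G`: a maximal 2-connected subgraph. -/
def IsBlock {V : Type*} (G : SimpleGraph V) (B : G.Subgraph) : Prop :=
  TwoConn B.coe ∧ ∀ B' : G.Subgraph, TwoConn B'.coe → B ≤ B' → B = B'

/-- Vertex type of the theta graph with path lengths `l`: two hubs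
(`Sum.inl false`, `Sum.inl true`) plus the internal vertices of each path. -/
def ThetaVert (l : List ℕ) : Type := Bool ⊕ (Σ i : Fin l.length, Fin (l.get i - 1))

/-- The theta graph `Θ_{l₁,…,l_k}`: two hubs joined by internally disjoint paths,
the `i`-th of length `l i`. -/
def thetaGraph (l : List ℕ) : SimpleGraph (ThetaVert l) :=
  SimpleGraph.fromRel (fun a b =>
    match a, b with
    | Sum.inl false, Sum.inl true => 1 ∈ l
    | Sum.inl false, Sum.inr ⟨_, j⟩ => j.val = 0
    | Sum.inl true, Sum.inr ⟨i, j⟩ => j.val = l.get i - 2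
    | Sum.inr ⟨i, j⟩, Sum.inr ⟨i', j'⟩ => i.val = i'.val ∧ j'.val = j.val + 1
    | _, _ => False)

/-- `v` (outside `c`) touches `w ∈ c`: some `v,w`-path meets `c` only at `w`. -/
def Touches {V : Type*} (G : SimpleGraph V) {u : V} (c : G.Walk u u) (v w : V) : Prop :=
  w ∈ c.support ∧ ∃ p : G.Walk v w, p.IsPath ∧ ∀ x ∈ p.support, x ∈ c.support → x = w

lemma stmt1_aux {V : Type*} [Fintype V] (G : SimpleGraph V)
    (D : G.edgeSet → G.edgeSet → Prop)
    (hor : IsOrientation (lineAdj G) D) (hkp : KernelPerfect D) :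
    ∀ n : ℕ, ∀ A : Set G.edgeSet, ∀ ℓ : G.edgeSet → Finset ℕ,
      A.ncard ≤ n →
      (∀ e ∈ A, {b ∈ A | D e b}.ncard + 1 ≤ (ℓ e).card) →
      ∃ φ : G.edgeSet → ℕ, (∀ e ∈ A, φ e ∈ ℓ e) ∧
        ∀ e₁ ∈ A, ∀ e₂ ∈ A, lineAdj G e₁ e₂ → φ e₁ ≠ φ e₂ := by
  classical
  intro n
  induction n with
  | zero =>
    intro A ℓ hA _
    have : A = ∅ := by
      have := Set.ncard_eq_zero (Set.toFinite A) |>.mp (Nat.le_zero.mp hA)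
      exact this
    subst this
    exact ⟨fun _ => 0, by simp, by simp⟩
  | succ n ih =>
    intro A ℓ hA hcard
    rcases Set.eq_empty_or_nonempty A with rfl | ⟨e₀, he₀⟩
    · exact ⟨fun _ => 0, by simp, by simp⟩
    -- pick a color α appearing in ℓ e₀
    have hne : (ℓ e₀).Nonempty := by
      have := hcard e₀ he₀
      exact Finset.card_pos.mp (by omega)
    obtain ⟨α, hα⟩ := hne
    set Z : Set G.edgeSet := {e ∈ A | α ∈ ℓ e} with hZ
    obtain ⟨S, hSZ, hind, habs⟩ := hkp Z
    have he₀Z : e₀ ∈ Z := ⟨he₀, hα⟩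
    -- S is nonempty
    have hSne : S.Nonempty := by
      by_cases h : e₀ ∈ S
      · exact ⟨e₀, h⟩
      · obtain ⟨s, hs, _⟩ := habs e₀ he₀Z h
        exact ⟨s, hs⟩
    obtain ⟨s₀, hs₀⟩ := hSne
    set A' : Set G.edgeSet := A \ S with hA'
    have hA'sub : A' ⊆ A := Set.diff_subset
    have hs₀A : s₀ ∈ A := (hSZ hs₀).1
    have hs₀A' : s₀ ∉ A' := fun h => h.2 hs₀
    have hlt : A'.ncard < A.ncard :=
      Set.ncard_lt_ncard ⟨hA'sub, fun h => hs₀A' (h hs₀A)⟩ (Set.toFinite A)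
    set ℓ' : G.edgeSet → Finset ℕ := fun e => (ℓ e).erase α with hℓ'
    have hsubdeg : ∀ e, {b ∈ A' | D e b} ⊆ {b ∈ A | D e b} := by
      intro e b hb; exact ⟨hA'sub hb.1, hb.2⟩
    have hcard' : ∀ e ∈ A', {b ∈ A' | D e b}.ncard + 1 ≤ (ℓ' e).card := by
      intro e heA'
      by_cases hαe : α ∈ ℓ e
      · -- e ∈ Z \ S, has out-neighbor in S
        have heZ : e ∈ Z := ⟨heA'.1, hαe⟩
        obtain ⟨s, hsS, hDs⟩ := habs e heZ heA'.2
        have hsA : s ∈ A := (hSZ hsS).1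
        have hsnot : s ∉ {b ∈ A' | D e b} := fun h => h.1.2 hsS
        have hins : insert s {b ∈ A' | D e b} ⊆ {b ∈ A | D e b} := by
          intro b hb
          rcases hb with rfl | hb
          · exact ⟨hsA, hDs⟩
          · exact hsubdeg e hb
        have h1 : {b ∈ A' | D e b}.ncard + 1 = (insert s {b ∈ A' | D e b}).ncard :=
          (Set.ncard_insert_of_notMem hsnot (Set.toFinite _)).symm
        have h2 : (insert s {b ∈ A' | D e b}).ncard ≤ {b ∈ A | D e b}.ncard :=
          Set.ncard_le_ncard hins (Set.toFinite _)
        have h3 := hcard e heA'.1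
        have h4 : (ℓ' e).card = (ℓ e).card - 1 := Finset.card_erase_of_mem hαe
        have h5 : 1 ≤ (ℓ e).card := Finset.card_pos.mpr ⟨α, hαe⟩
        omega
      · have h4 : ℓ' e = ℓ e := Finset.erase_eq_of_notMem hαe
        have h2 : {b ∈ A' | D e b}.ncard ≤ {b ∈ A | D e b}.ncard :=
          Set.ncard_le_ncard (hsubdeg e) (Set.toFinite _)
        have h3 := hcard e heA'.1
        rw [h4]; omega
    obtain ⟨φ', hφ'mem, hφ'prop⟩ := ih A' ℓ' (by omega) hcard'
    refine ⟨fun e => if e ∈ S then α else φ' e, ?_, ?_⟩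
    · intro e heA
      by_cases h : e ∈ S
      · simp only [h, if_true]
        exact (hSZ h).2
      · simp only [h, if_false]
        have heA' : e ∈ A' := ⟨heA, h⟩
        exact Finset.erase_subset α (ℓ e) (hφ'mem e heA')
    · intro e₁ h₁ e₂ h₂ hadj
      by_cases hS₁ : e₁ ∈ S <;> by_cases hS₂ : e₂ ∈ S
      · exfalso
        rcases hor.2 e₁ e₂ hadj with h | h
        · exact hind e₁ hS₁ e₂ hS₂ h
        · exact hind e₂ hS₂ e₁ hS₁ h
      · simp only [hS₁, hS₂, if_true, if_false]
        have : φ' e₂ ∈ ℓ' e₂ := hφ'mem e₂ ⟨h₂, hS₂⟩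
        exact fun h => (Finset.ne_of_mem_erase this) h.symm
      · simp only [hS₁, hS₂, if_true, if_false]
        have : φ' e₁ ∈ ℓ' e₁ := hφ'mem e₁ ⟨h₁, hS₁⟩
        exact Finset.ne_of_mem_erase this
      · simp only [hS₁, hS₂, if_false]
        exact hφ'prop e₁ ⟨h₁, hS₁⟩ e₂ ⟨h₂, hS₂⟩ hadj

/-- Bondy–Boppana–Siegel: a kernel-perfect orientation of `L(G)` with
`f e = 1 + d⁺(e)` yields `f`-edge-choosability. -/
theorem stmt1 {V : Type*} [Fintype V] (G : SimpleGraph V)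
    (D : G.edgeSet → G.edgeSet → Prop)
    (hor : IsOrientation (lineAdj G) D) (hkp : KernelPerfect D)
    (f : G.edgeSet → ℕ) (hf : ∀ e, f e = 1 + outDeg D e) :
    FEdgeChoosable G f := by
  intro ℓ hℓ
  have key := stmt1_aux G D hor hkp (Set.univ : Set G.edgeSet).ncard Set.univ ℓ le_rfl
    (by
      intro e _
      have h1 : {b ∈ (Set.univ : Set G.edgeSet) | D e b} = {b | D e b} := by
        ext b; simp
      have h2 := hℓ e
      rw [hf e] at h2
      rw [h1]
      unfold outDeg at h2
      omega)
  obtain ⟨φ, hmem, hprop⟩ := key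
  exact ⟨φ, fun e => hmem e (Set.mem_univ e),
    fun e₁ e₂ hadj => hprop e₁ (Set.mem_univ e₁) e₂ (Set.mem_univ e₂) hadj⟩
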